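/- With the distributed iteration Sᵢ(κ+1) = P[B_{Mᵢ}→Bᵢ]( ⋂_{j∈Mᵢ} E[Bⱼ→B_{Mᵢ}](Sⱼ(κ)) ), started from arbitrary sets Sᵢ(0) of points over Bᵢ, define Sᵢ* := ⋂_{κ∈ℕ} Sᵢ(κ). Then ⋂_{i=1}^N E[Bᵢ→B̄](Sᵢ*) = S̄, where S̄ := ⋂_{i=1}^N E[Bᵢ→B̄](Sᵢ(0)). -/

import Mathlib

/-- A point over an axis set `B` (a finite subset of `ℕ`): an assignment of a real
number to each coordinate in `B`. -/
abbrev Pt (B : Finset ℕ) : Type := {n : ℕ // n ∈ B} → ℝ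

/-- Projection (restriction) of a single point over `B₂` onto a sub-axis-set `B₁ ⊆ B₂`. -/
def projPt {B₁ B₂ : Finset ℕ} (h : B₁ ⊆ B₂) (v : Pt B₂) : Pt B₁ :=
  fun x => v ⟨x.1, h x.2⟩

/-- Projection of a set of points over `B₂` onto `B₁ ⊆ B₂`. -/
def proj {B₁ B₂ : Finset ℕ} (h : B₁ ⊆ B₂) (V : Set (Pt B₂)) : Set (Pt B₁) :=
  projPt h '' V

/-- Extrusion of a set of points over `B₁` to the larger axis set `B₂ ⊇ B₁`. -/
def extr {B₁ B₂ : Finset ℕ} (h : B₁ ⊆ B₂) (W : Set (Pt B₁)) : Set (Pt B₂) :=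
  { v | projPt h v ∈ W }

/-- The union of the axis sets `B₁, …, B_N`. -/
def Bunion {N : ℕ} (B : Fin N → Finset ℕ) : Finset ℕ :=
  Finset.univ.biUnion B

lemma subset_Bunion {N : ℕ} (B : Fin N → Finset ℕ) (i : Fin N) : B i ⊆ Bunion B :=
  Finset.subset_biUnion_of_mem B (Finset.mem_univ i)

/-- The neighbourhood `Mᵢ = {j : Bᵢ ∩ Bⱼ ≠ ∅}` of node `i`. -/
def Mset {N : ℕ} (B : Fin N → Finset ℕ) (i : Fin N) : Finset (Fin N) :=
  Finset.univ.filter (fun j => (B i ∩ B j).Nonempty)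

/-- The axis set `B_{Mᵢ} = ⋃_{j ∈ Mᵢ} Bⱼ`. -/
def BMset {N : ℕ} (B : Fin N → Finset ℕ) (i : Fin N) : Finset ℕ :=
  (Mset B i).biUnion B

lemma subset_BMset {N : ℕ} (B : Fin N → Finset ℕ) {i j : Fin N} (h : j ∈ Mset B i) :
    B j ⊆ BMset B i :=
  Finset.subset_biUnion_of_mem B h

lemma self_mem_Mset {N : ℕ} {B : Fin N → Finset ℕ} {i : Fin N} (h : (B i).Nonempty) :
    i ∈ Mset B i :=
  Finset.mem_filter.mpr ⟨Finset.mem_univ i, by rwa [Finset.inter_self]⟩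

/-! A step of the iteration only shrinks each local set `Sᵢ` (node `i` is its own
neighbour), but a point over `B̄` all of whose restrictions lie in the current sets restricts
on `B_{Mᵢ}` to a witness for membership in the next set. Hence `⋂ᵢ E[Bᵢ→B̄](Sᵢ(κ))` does not
depend on `κ`, and since extrusion commutes with intersections, intersecting over `κ`
gives `S̄`. -/

section ProjExtr

variable {B₀ B₁ B₂ : Finset ℕ}

lemma extr_iInter {ι : Sort*} (h : B₁ ⊆ B₂) (W : ι → Set (Pt B₁)) :
    extr h (⋂ k, W k) = ⋂ k, extr h (W k) :=
  Set.preimage_iInter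

lemma extr_mono (h : B₁ ⊆ B₂) {W W' : Set (Pt B₁)} (hW : W ⊆ W') :
    extr h W ⊆ extr h W' :=
  Set.preimage_mono hW

lemma proj_extr_subset (h : B₁ ⊆ B₂) (W : Set (Pt B₁)) : proj h (extr h W) ⊆ W :=
  Set.image_preimage_subset _ _

lemma extr_subset_extr_proj (h₁ : B₀ ⊆ B₁) (h₂ : B₁ ⊆ B₂) (V : Set (Pt B₁)) :
    extr h₂ V ⊆ extr (h₁.trans h₂) (proj h₁ V) :=
  fun v hv => ⟨projPt h₂ v, hv, rfl⟩

end ProjExtr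

lemma BMset_subset_Bunion {N : ℕ} (B : Fin N → Finset ℕ) (i : Fin N) :
    BMset B i ⊆ Bunion B :=
  Finset.biUnion_subset_biUnion_of_subset_left B (Finset.subset_univ _)

section DistribStep

variable {N : ℕ} (B : Fin N → Finset ℕ) (hBne : ∀ i, (B i).Nonempty)

def distribStep (T : (i : Fin N) → Set (Pt (B i))) (i : Fin N) : Set (Pt (B i)) :=
  proj (subset_BMset B (self_mem_Mset (hBne i)))
    (⋂ j : {j // j ∈ Mset B i}, extr (subset_BMset B j.2) (T j.1))

variable {B}

lemma distribStep_subset (T : (i : Fin N) → Set (Pt (B i))) (i : Fin N) :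
    distribStep B hBne T i ⊆ T i :=
  (Set.image_mono (Set.iInter_subset _ ⟨i, self_mem_Mset (hBne i)⟩)).trans
    (proj_extr_subset _ _)

lemma iInter_extr_distribStep (T : (i : Fin N) → Set (Pt (B i))) :
    ⋂ i, extr (subset_Bunion B i) (distribStep B hBne T i) =
      ⋂ i, extr (subset_Bunion B i) (T i) := by
  refine (Set.iInter_mono fun i => extr_mono _ (distribStep_subset hBne T i)).antisymm ?_
  intro v hv
  refine Set.mem_iInter.mpr fun i =>
    extr_subset_extr_proj (subset_BMset B (self_mem_Mset (hBne i))) (BMset_subset_Bunion B i) _ ?_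
  rw [extr_iInter]
  exact Set.mem_iInter.mpr fun j => Set.mem_iInter.mp hv j.1

end DistribStep

theorem iInter_extr_limit_eq_general
    {N : ℕ} (B : Fin N → Finset ℕ)
    (hBne : ∀ i, (B i).Nonempty)
    (S : (i : Fin N) → ℕ → Set (Pt (B i)))
    (hiter : ∀ (i : Fin N) (κ : ℕ), S i (κ + 1) =
      proj (subset_BMset B (self_mem_Mset (hBne i)))
        (⋂ j : {j // j ∈ Mset B i}, extr (subset_BMset B j.2) (S j.1 κ)))
    (Sbar : Set (Pt (Bunion B)))
    (hSbar : Sbar = ⋂ i, extr (subset_Bunion B i) (S i 0)) :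
    (⋂ i, extr (subset_Bunion B i) (⋂ κ : ℕ, S i κ)) = Sbar := by
  subst hSbar
  have invariant : ∀ κ, ⋂ i, extr (subset_Bunion B i) (S i κ) =
      ⋂ i, extr (subset_Bunion B i) (S i 0) := by
    intro κ
    induction κ with
    | zero => rfl
    | succ κ ih =>
      simp only [hiter]
      exact (iInter_extr_distribStep hBne fun j => S j κ).trans ih
  calc (⋂ i, extr (subset_Bunion B i) (⋂ κ : ℕ, S i κ))
      = ⋂ i, ⋂ κ : ℕ, extr (subset_Bunion B i) (S i κ) :=
        Set.iInter_congr fun i => extr_iInter _ _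
    _ = ⋂ κ : ℕ, ⋂ i, extr (subset_Bunion B i) (S i κ) := Set.iInter_comm _
    _ = ⋂ i, extr (subset_Bunion B i) (S i 0) := by
        rw [Set.iInter_congr invariant, Set.iInter_const]

/-- Lemma 2, point ii: with `Sᵢ* = ⋂_κ Sᵢ(κ)`, the limit sets of the
distributed iteration still generate the centralized set: `⋂ᵢ E[Bᵢ→B̄](Sᵢ*) = S̄`. -/
theorem iInter_extr_limit_eq
    {N : ℕ} (hN : 1 ≤ N) (B : Fin N → Finset ℕ)
    (hBne : ∀ i, (B i).Nonempty)
    (S : (i : Fin N) → ℕ → Set (Pt (B i)))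
    (hiter : ∀ (i : Fin N) (κ : ℕ), S i (κ + 1) =
      proj (subset_BMset B (self_mem_Mset (hBne i)))
        (⋂ j : {j // j ∈ Mset B i}, extr (subset_BMset B j.2) (S j.1 κ)))
    (Sbar : Set (Pt (Bunion B)))
    (hSbar : Sbar = ⋂ i, extr (subset_Bunion B i) (S i 0)) :
    (⋂ i, extr (subset_Bunion B i) (⋂ κ : ℕ, S i κ)) = Sbar :=
  iInter_extr_limit_eq_general B hBne S hiter Sbar hSbar
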